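/- arXiv:1506.02096 — 2 statements merged into one kernel-verified Lean document; each statement's English description precedes it below -/
import Mathlib

section
/- Define binary rooted trees T_i by: T_1 is a single node, and for i ≥ 2, T_i consists of a root whose left subtree is a copy of T_{i−1} and whose right subtree is a rooted path with |T_{i−1}| + 1 nodes. Then for every i ≥ 1, T_i has exactly 3·2^{i−1} − 2 nodes and hpd(T_i) = i, and for every i ≥ 2, rpw(T_i) = 2. In particular, there are infinitely many binary trees whose rooted pathwidth is 2 but whose heaviest-path depth is Ω(log n) in the number n of nodes. -/
/-- A finite rooted tree: a root together with the list of subtrees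
rooted at its children (the list order is the left-to-right order for
ordered trees; definitions that do not mention the order are
order-independent). -/
inductive RTree : Type where
  | node : List RTree → RTree

namespace RTree

/-- The subtrees rooted at the children of the root. -/
def children : RTree → List RTree
  | node cs => cs

/-- Number of nodes of the tree. -/
def size : RTree → ℕ
  | node cs => 1 + (cs.attach.map fun c => size c.1).sum
decreasing_by have := List.sizeOf_lt_of_mem c.2; simp only [RTree.node.sizeOf_spec]; omega

/-- Maximum of a list of naturals (`0` for the empty list). -/
def listMaxD (l : List ℕ) : ℕ := l.foldr max 0

/-- Minimum of a nonempty list of naturals (`0` for the empty list). -/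
def listMinD : List ℕ → ℕ
  | [] => 0
  | x :: xs => xs.foldr min x

/-- Given the list `rs` of rooted pathwidths of the children of the root,
the rooted pathwidth of the tree:
`1` if there are no children, and otherwise
`min over j of (max over i of rs[i] + χ(i ≠ j))`. -/
def rpwAux (rs : List ℕ) : ℕ :=
  if rs = [] then 1 else
    listMinD ((List.range rs.length).map fun j =>
      listMaxD ((List.range rs.length).map fun i =>
        rs.getD i 0 + if i = j then 0 else 1))

/-- The rooted pathwidth `rpw` of a rooted tree. -/
def rpw : RTree → ℕ
  | node cs => rpwAux (cs.attach.map fun c => rpw c.1)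
decreasing_by have := List.sizeOf_lt_of_mem c.2; simp only [RTree.node.sizeOf_spec]; omega

end RTree

namespace RTree

/-- Given the list `szs` of sizes of the children subtrees and the list `rs`
of their heaviest-path depths, the heaviest-path depth of the tree:
`1` if there are no children, and otherwise the minimum over all
size-heaviest children `j` of `max over i of rs[i] + χ(i ≠ j)`. -/
def hpdAux (szs rs : List ℕ) : ℕ :=
  if rs = [] then 1 else
    listMinD (((List.range rs.length).filter fun j =>
        szs.getD j 0 = listMaxD szs).map fun j =>
      listMaxD ((List.range rs.length).map fun i =>
        rs.getD i 0 + if i = j then 0 else 1))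

/-- The heaviest-path depth `hpd` of a rooted tree. -/
def hpd : RTree → ℕ
  | node cs => hpdAux (cs.map size) (cs.attach.map fun c => hpd c.1)
decreasing_by have := List.sizeOf_lt_of_mem c.2; simp only [RTree.node.sizeOf_spec]; omega

end RTree

namespace RTree

/-- Every node of the tree has at most `k` children. -/
inductive DegLE (k : ℕ) : RTree → Prop
  | mk (cs : List RTree) : cs.length ≤ k → (∀ c ∈ cs, DegLE k c) →
      DegLE k (RTree.node cs)

/-- `pathT n` is a rooted path with `n + 1` nodes. -/
def pathT : ℕ → RTree
  | 0 => node []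
  | n + 1 => node [pathT n]

/-- The family `T_i` (indexed so that `Tseq i = T_i` for `i ≥ 1`):
`T_1` is a single node, and for `i ≥ 2` the root of `T_i` has left subtree
`T_{i-1}` and right subtree a rooted path with `|T_{i-1}| + 1` nodes. -/
def Tseq : ℕ → RTree
  | 0 => node []
  | 1 => node []
  | i + 2 => node [Tseq (i + 1), pathT (size (Tseq (i + 1)))]

/-!
The path hanging from the root of `T_{i+1}` has one node more than `T_i`, so it is the unique
size-heaviest child, and the heavy path must leave `T_i` through a light edge:
`hpd T_{i+1} = hpd T_i + 1`. Rooted pathwidth may instead let the heavy path continue into `T_i`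
and pay the light edge on the path side, where the width is `1`; hence `rpw` stays at `2`.
Sizes satisfy `|T_{i+1}| + 2 = 2 (|T_i| + 2)`, so `hpd` grows like `log₂` of the size.
-/

@[simp]
lemma size_node (cs : List RTree) : size (node cs) = 1 + (cs.map size).sum := by
  rw [size, List.map_attach_eq_pmap, List.pmap_eq_map]

@[simp]
lemma rpw_node (cs : List RTree) : rpw (node cs) = rpwAux (cs.map rpw) := by
  rw [rpw, List.map_attach_eq_pmap, List.pmap_eq_map]

@[simp]
lemma hpd_node (cs : List RTree) : hpd (node cs) = hpdAux (cs.map size) (cs.map hpd) := by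
  rw [hpd, List.map_attach_eq_pmap, List.pmap_eq_map]

lemma size_pos (t : RTree) : 0 < size t := by
  cases t; simp

@[simp]
lemma rpwAux_nil : rpwAux [] = 1 := rfl

@[simp]
lemma rpwAux_singleton (a : ℕ) : rpwAux [a] = a := by
  simp [rpwAux, listMinD, listMaxD]

lemma rpwAux_pair (a b : ℕ) : rpwAux [a, b] = min (max a (b + 1)) (max (a + 1) b) := by
  simp [rpwAux, listMinD, listMaxD, List.range_succ, min_comm]

@[simp]
lemma hpdAux_nil (szs : List ℕ) : hpdAux szs [] = 1 := rfl

@[simp]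
lemma hpdAux_singleton (s a : ℕ) : hpdAux [s] [a] = a := by
  simp [hpdAux, listMinD, listMaxD]

lemma hpdAux_pair_of_lt {s t : ℕ} (h : s < t) (a b : ℕ) :
    hpdAux [s, t] [a, b] = max (a + 1) b := by
  simp [hpdAux, listMinD, listMaxD, List.range_succ, List.filter, h.ne, max_eq_right h.le]

@[simp]
lemma size_pathT (n : ℕ) : size (pathT n) = n + 1 := by
  induction n with
  | zero => simp [pathT]
  | succ n ih => simp [pathT, ih, add_comm]

@[simp]
lemma rpw_pathT (n : ℕ) : rpw (pathT n) = 1 := by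
  induction n with
  | zero => simp [pathT]
  | succ n ih => simp [pathT, ih]

@[simp]
lemma hpd_pathT (n : ℕ) : hpd (pathT n) = 1 := by
  induction n with
  | zero => simp [pathT]
  | succ n ih => simp [pathT, ih]

lemma degLE_pathT (n : ℕ) : DegLE 2 (pathT n) := by
  induction n with
  | zero => exact ⟨[], by simp, by simp⟩
  | succ n ih => exact ⟨[pathT n], by simp, by simpa using ih⟩

@[simp]
lemma Tseq_one : Tseq 1 = node [] := rfl

lemma Tseq_add_two (i : ℕ) :
    Tseq (i + 2) = node [Tseq (i + 1), pathT (size (Tseq (i + 1)))] := rfl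

lemma degLE_Tseq (i : ℕ) : DegLE 2 (Tseq (i + 1)) := by
  induction i with
  | zero => exact ⟨[], by simp, by simp⟩
  | succ i ih => exact ⟨_, by simp, by simpa using ⟨ih, degLE_pathT _⟩⟩

lemma size_Tseq_add_two (i : ℕ) : size (Tseq (i + 1)) + 2 = 3 * 2 ^ i := by
  induction i with
  | zero => simp
  | succ i ih => simp [Tseq_add_two, pow_succ]; omega

lemma hpd_Tseq (i : ℕ) : hpd (Tseq (i + 1)) = i + 1 := by
  induction i with
  | zero => simp
  | succ i ih => simp [Tseq_add_two, hpdAux_pair_of_lt, ih]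

lemma rpw_Tseq (i : ℕ) : rpw (Tseq (i + 2)) = 2 := by
  induction i with
  | zero => simp [Tseq_add_two, rpwAux_pair]
  | succ i ih => rw [Tseq_add_two, rpw_node]; simp [ih, rpwAux_pair]

lemma logb_two_size_Tseq_le (i : ℕ) : Real.logb 2 (size (Tseq (i + 1))) ≤ i + 2 := by
  have hle : size (Tseq (i + 1)) ≤ 2 ^ (i + 2) := by
    have := size_Tseq_add_two i
    rw [pow_add]
    omega
  calc Real.logb 2 (size (Tseq (i + 1)))
      ≤ Real.logb 2 ((2 : ℝ) ^ (i + 2)) :=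
        Real.logb_le_logb_of_le one_lt_two (by exact_mod_cast size_pos _) (by exact_mod_cast hle)
    _ = i + 2 := by simp [Real.logb_pow]

/-- For every `i ≥ 1`, the binary tree `T_i` has exactly `3·2^{i-1} - 2`
nodes and heaviest-path depth exactly `i`; for every `i ≥ 2`, its rooted
pathwidth is `2`.  In particular (last clause) this gives infinitely many
binary trees with rooted pathwidth `2` whose heaviest-path depth is
`Ω(log n)` in the number `n` of nodes. -/
theorem rpw_two_but_hpd_log :
    (∀ i, 1 ≤ i →
      DegLE 2 (Tseq i) ∧ size (Tseq i) = 3 * 2 ^ (i - 1) - 2 ∧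
        hpd (Tseq i) = i) ∧
    (∀ i, 2 ≤ i → rpw (Tseq i) = 2) ∧
    (∀ i, 2 ≤ i →
      Real.logb 2 ((size (Tseq i) : ℝ)) ≤ (hpd (Tseq i) : ℝ) + 1) := by
  refine ⟨fun i hi => ?_, fun i hi => ?_, fun i hi => ?_⟩
  · obtain ⟨i, rfl⟩ := Nat.exists_eq_add_of_le' hi
    have hsize := size_Tseq_add_two i
    exact ⟨degLE_Tseq i, by simp only [Nat.add_sub_cancel]; omega, hpd_Tseq i⟩
  · obtain ⟨i, rfl⟩ := Nat.exists_eq_add_of_le' hi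
    exact rpw_Tseq i
  · obtain ⟨i, rfl⟩ := Nat.exists_eq_add_of_le' (one_le_two.trans hi)
    rw [hpd_Tseq]
    push_cast
    linarith [logb_two_size_Tseq_le i]

end RTree
end

section
/- Let T be an ordered rooted tree with rank R(T) = W ≥ 2. Then T has a rank-W-witness whose coordinate X satisfies X = 1 or X = W. -/
namespace RTree

/-- A rank-`W`-witness for a tree whose root has `rs.length ≥ 1` children,
where `rs` is the list of ranks of the children subtrees (left to right,
`0`-indexed).  It consists of a set `big` of big children (the others are
small), a coordinate `X` with `1 ≤ X ≤ W`, and the index `v` of the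
vertical child, which must be big, subject to (R1ℓ), (R1r), (R2ℓ), (R2r)
and (R3). -/
def IsRankWitness (rs : List ℕ) (W : ℕ) (big : Finset (Fin rs.length)) (X : ℕ)
    (v : Fin rs.length) : Prop :=
  1 ≤ X ∧ X ≤ W ∧ v ∈ big ∧
  -- (R1ℓ): at most X-1 big children are strictly left of c_v
  ((big.filter fun i => i < v).card < X) ∧
  -- (R1r): at most W-X big children are strictly right of c_v
  ((big.filter fun i => v < i).card + X ≤ W) ∧
  -- (R2ℓ): every small child left of c_v has rank ≤ X-1-ℓ_i
  (∀ i : Fin rs.length, i ∉ big → i < v →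
      rs.get i + (big.filter fun j => j < i).card + 1 ≤ X) ∧
  -- (R2r): every small child right of c_v has rank ≤ W-X-r_i
  (∀ i : Fin rs.length, i ∉ big → v < i →
      rs.get i + (big.filter fun j => i < j).card + X ≤ W) ∧
  -- (R3): injective rank-bounds π : big → {1,…,W} dominating the ranks
  (∃ π : Fin rs.length → ℕ,
      (∀ i ∈ big, rs.get i ≤ π i ∧ 1 ≤ π i ∧ π i ≤ W) ∧
      Set.InjOn π big)

/-- `T` (with child rank list `rs`) has some rank-`W`-witness. -/
def hasRankWitness (rs : List ℕ) (W : ℕ) : Prop :=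
  ∃ (big : Finset (Fin rs.length)) (X : ℕ) (v : Fin rs.length),
    IsRankWitness rs W big X v

/-- Rank of a tree, given the list of ranks of the children of the root:
`1` for a single node, else the smallest `W ≥ 1` admitting a rank-`W`-witness. -/
noncomputable def rankAux (rs : List ℕ) : ℕ :=
  if rs = [] then 1 else sInf {W | 1 ≤ W ∧ hasRankWitness rs W}

/-- The rank `R(T)` of an ordered rooted tree. -/
noncomputable def rank : RTree → ℕ
  | node cs => rankAux (cs.attach.map fun c => rank c.1)
decreasing_by have := List.sizeOf_lt_of_mem c.2; simp only [RTree.node.sizeOf_spec]; omega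

/-- A left-corner-`W`-witness, given the list `rs` of ranks of the children of
the root: a number `W'` with `1 ≤ W' ≤ W+1` and indices
`σ(W') < … < σ(W)` (1-based positions in `{1,…,d}`, so the rank of child
`σ w` is `rs.getD (σ w - 1) 0`) satisfying (C1) and (C2), where by
convention `σ(W'-1) = 0` and `σ(W+1) = d+1`. -/
def IsLeftCornerWitness (rs : List ℕ) (W W' : ℕ) (σ : ℕ → ℕ) : Prop :=
  1 ≤ W' ∧ W' ≤ W + 1 ∧
  (∀ w, W' ≤ w → w ≤ W → 1 ≤ σ w ∧ σ w ≤ rs.length) ∧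
  (∀ w, W' ≤ w → w + 1 ≤ W → σ w < σ (w + 1)) ∧
  -- (C1)
  (∀ w, W' ≤ w → w ≤ W → rs.getD (σ w - 1) 0 = w) ∧
  -- (C2): for `W'-1 ≤ w ≤ W`, children strictly between σ(w) and σ(w+1)
  -- have rank ≤ w-1
  (∀ w, W' ≤ w + 1 → w ≤ W → ∀ i,
      (if W' ≤ w then σ w else 0) < i →
      i < (if w + 1 ≤ W then σ (w + 1) else rs.length + 1) →
      rs.getD (i - 1) 0 + 1 ≤ w)

/-- A right-corner-`W`-witness: the mirror notion, with
`σ(W) < … < σ(W')` and the conventions `σ(W'-1) = d+1`, `σ(W+1) = 0`. -/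
def IsRightCornerWitness (rs : List ℕ) (W W' : ℕ) (σ : ℕ → ℕ) : Prop :=
  1 ≤ W' ∧ W' ≤ W + 1 ∧
  (∀ w, W' ≤ w → w ≤ W → 1 ≤ σ w ∧ σ w ≤ rs.length) ∧
  (∀ w, W' ≤ w → w + 1 ≤ W → σ (w + 1) < σ w) ∧
  -- (C1)
  (∀ w, W' ≤ w → w ≤ W → rs.getD (σ w - 1) 0 = w) ∧
  -- (C2)
  (∀ w, W' ≤ w + 1 → w ≤ W → ∀ i,
      (if w + 1 ≤ W then σ (w + 1) else 0) < i →
      i < (if W' ≤ w then σ w else rs.length + 1) →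
      rs.getD (i - 1) 0 + 1 ≤ w)

end RTree

/-!
A child of rank `W` is necessarily big with `π = W`, so there is at most one. Call a *doubled
staircase* a sequence of children, from left to right, of ranks `W, W - 1, …, W - j, W - j`.
If there is none, the steps of the greedy staircase `W, W - 1, …` together with the last child as
`v` form a witness with `X = W`, taking `π = W - (number of earlier steps)`. A doubled staircase
leaves no room for a witness with `X = W`: its children up to the first small one are big, and too
many of them have rank `≥ W - j`. If the tree and its mirror image both contain a doubled
staircase, both start at the unique child of rank `W`, so no witness exists at all: for
`1 < X < W` that child and its two staircase neighbours of rank `W - 1` are three big children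
competing for `π ∈ {W - 1, W}`, and the cases `X = W`, `X = 1` are the previous obstruction for the
tree or its mirror image. Hence the tree or its mirror image has a witness with `X = W`; mirroring
turns `X` into `W + 1 - X`.
-/

namespace RTree

open Finset

variable {n : ℕ}

theorem card_filter_map_rev (s : Finset (Fin n)) (p : Fin n → Prop) [DecidablePred p] :
    ((s.map Fin.revPerm.toEmbedding).filter p).card = (s.filter fun i => p i.rev).card := by
  rw [filter_map, card_map]
  rfl

theorem card_image_range_of_strictMonoOn {β : Type*} [Preorder β] [DecidableEq β] {a : ℕ → β}
    {k m : ℕ} (ha : StrictMonoOn a (Set.Iic k)) (hm : m ≤ k + 1) :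
    ((range m).image a).card = m := by
  refine (card_image_of_injOn (ha.injOn.mono fun s hs => ?_)).trans (card_range m)
  rw [coe_range, Set.mem_Iio] at hs
  rw [Set.mem_Iic]
  omega

/-- `IsRankWitness` for an arbitrary rank function on the children, so that it can be mirrored
(`IsWitness.rev`). -/
structure IsWitness (W : ℕ) (r : Fin n → ℕ) (big : Finset (Fin n)) (X : ℕ) (v : Fin n) :
    Prop where
  one_le : 1 ≤ X
  le : X ≤ W
  mem : v ∈ big
  card_left_lt : (big.filter fun i => i < v).card < X
  card_right_add_le : (big.filter fun i => v < i).card + X ≤ W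
  small_left : ∀ i, i ∉ big → i < v → r i + (big.filter fun j => j < i).card + 1 ≤ X
  small_right : ∀ i, i ∉ big → v < i → r i + (big.filter fun j => i < j).card + X ≤ W
  exists_bound : ∃ π : Fin n → ℕ,
    (∀ i ∈ big, r i ≤ π i ∧ 1 ≤ π i ∧ π i ≤ W) ∧ Set.InjOn π big

theorem isRankWitness_iff {rs : List ℕ} {W X : ℕ} {big : Finset (Fin rs.length)}
    {v : Fin rs.length} : IsRankWitness rs W big X v ↔ IsWitness W rs.get big X v :=
  ⟨fun ⟨h₁, h₂, h₃, h₄, h₅, h₆, h₇, h₈⟩ => ⟨h₁, h₂, h₃, h₄, h₅, h₆, h₇, h₈⟩,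
    fun ⟨h₁, h₂, h₃, h₄, h₅, h₆, h₇, h₈⟩ => ⟨h₁, h₂, h₃, h₄, h₅, h₆, h₇, h₈⟩⟩

/-- Positions `a 0 < ⋯ < a (j + 1)` whose ranks read `W, W - 1, …, W - j, W - j`: the obstruction
to a witness with `X = W`. -/
def HasDoubledStaircase (W : ℕ) (r : Fin n → ℕ) : Prop :=
  ∃ (j : ℕ) (a : ℕ → Fin n), StrictMonoOn a (Set.Iic (j + 1)) ∧ ∀ s ≤ j + 1, r (a s) = W - min s j

namespace IsWitness

variable {W X : ℕ} {r : Fin n → ℕ} {big : Finset (Fin n)} {v : Fin n}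

theorem rank_lt_or_add_le (h : IsWitness W r big X v) {i : Fin n} (hi : i ∉ big) :
    r i < X ∨ r i + X ≤ W := by
  rcases lt_trichotomy i v with hiv | rfl | hvi
  · have := h.small_left i hi hiv
    omega
  · exact absurd h.mem hi
  · have := h.small_right i hi hvi
    omega

theorem rank_le (h : IsWitness W r big X v) (i : Fin n) : r i ≤ W := by
  by_cases hi : i ∈ big
  · obtain ⟨π, hπ, -⟩ := h.exists_bound
    exact (hπ i hi).1.trans (hπ i hi).2.2
  · have := h.le
    have := h.rank_lt_or_add_le hi
    omega

theorem mem_of_le_rank (h : IsWitness W r big X v) {i : Fin n} (hX : X ≤ r i)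
    (hW : W < r i + X) : i ∈ big := by
  by_contra hi
  have := h.rank_lt_or_add_le hi
  omega

theorem mem_of_rank_eq (h : IsWitness W r big X v) {i : Fin n} (hi : r i = W) : i ∈ big :=
  h.mem_of_le_rank (hi ▸ h.le) (by have := h.one_le; omega)

theorem card_filter_le (h : IsWitness W r big X v) (t : ℕ) :
    (big.filter fun i => t ≤ r i).card ≤ W + 1 - t := by
  obtain ⟨π, hπ, hinj⟩ := h.exists_bound
  calc (big.filter fun i => t ≤ r i).card ≤ (Icc t W).card := by
        refine card_le_card_of_injOn π (fun i hi => ?_)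
          (hinj.mono (coe_subset.2 (filter_subset _ _)))
        obtain ⟨hi, hti⟩ := mem_filter.1 (mem_coe.1 hi)
        have := hπ i hi
        rw [coe_Icc, Set.mem_Icc]
        omega
    _ = W + 1 - t := Nat.card_Icc t W

theorem eq_of_rank_eq (h : IsWitness W r big X v) {i i' : Fin n} (hi : r i = W)
    (hi' : r i' = W) : i = i' :=
  card_le_one.1 (by simpa using h.card_filter_le W) i
    (by simp [h.mem_of_rank_eq hi, hi]) i' (by simp [h.mem_of_rank_eq hi', hi'])

theorem rev (h : IsWitness W r big X v) :
    IsWitness W (r ∘ Fin.rev) (big.map Fin.revPerm.toEmbedding) (W + 1 - X) v.rev := by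
  have hX := h.one_le
  have hXW := h.le
  have hmem' : ∀ i : Fin n, i ∈ big.map Fin.revPerm.toEmbedding ↔ i.rev ∈ big := by
    simp [mem_map_equiv]
  have hmem : ∀ i : Fin n, i.rev ∈ big.map Fin.revPerm.toEmbedding ↔ i ∈ big := by
    simp [mem_map_equiv]
  refine ⟨by omega, by omega, (hmem v).2 h.mem, ?_, ?_, ?_, ?_, ?_⟩
  · have := h.card_right_add_le
    simp only [card_filter_map_rev, Fin.rev_lt_rev]
    omega
  · have := h.card_left_lt
    simp only [card_filter_map_rev, Fin.rev_lt_rev]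
    omega
  · intro i hi hiv
    obtain ⟨i, rfl⟩ := Fin.rev_surjective i
    rw [hmem] at hi
    rw [Fin.rev_lt_rev] at hiv
    have := h.small_right i hi hiv
    simp only [card_filter_map_rev, Fin.rev_lt_rev, Function.comp_apply, Fin.rev_rev]
    omega
  · intro i hi hvi
    obtain ⟨i, rfl⟩ := Fin.rev_surjective i
    rw [hmem] at hi
    rw [Fin.rev_lt_rev] at hvi
    have := h.small_left i hi hvi
    simp only [card_filter_map_rev, Fin.rev_lt_rev, Function.comp_apply, Fin.rev_rev]
    omega
  · obtain ⟨π, hπ, hinj⟩ := h.exists_bound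
    exact ⟨π ∘ Fin.rev, fun i hi => hπ _ ((hmem' i).1 hi), fun i hi i' hi' hii' =>
      Fin.rev_injective (hinj ((hmem' i).1 hi) ((hmem' i').1 hi') hii')⟩

theorem not_hasDoubledStaircase (h : IsWitness W r big W v) (hpos : ∀ i, 1 ≤ r i) :
    ¬HasDoubledStaircase W r := by
  rintro ⟨j, a, ha, hra⟩
  have hj : j < W := by
    have := hra (j + 1) le_rfl
    have := hpos (a (j + 1))
    omega
  have hbig : ∀ s ≤ j + 1, a s ∈ big := by
    intro s
    induction s using Nat.strong_induction_on with
    | _ s ih =>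
      intro hs
      by_contra hns
      -- a small `a s` has the `s` big children `a 0, …, a (s - 1)` to its left: too many for (R2ℓ)
      have hleft : s ≤ (big.filter fun i => i < a s).card := by
        refine (card_image_range_of_strictMonoOn ha (m := s) (by omega)).symm.le.trans
          (card_le_card fun i hi => ?_)
        obtain ⟨t, ht, rfl⟩ := mem_image.1 hi
        rw [mem_range] at ht
        exact mem_filter.2
          ⟨ih t ht (by omega), ha (Set.mem_Iic.2 (by omega)) (Set.mem_Iic.2 hs) ht⟩
      have hrs := hra s hs
      rcases lt_or_gt_of_ne (ne_of_mem_of_not_mem h.mem hns).symm with hsv | hvs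
      · have := h.small_left _ hns hsv
        omega
      · have := h.small_right _ hns hvs
        have := hpos (a s)
        omega
  have hcard : j + 2 ≤ (big.filter fun i => W - j ≤ r i).card := by
    rw [← card_image_range_of_strictMonoOn ha (m := j + 2) le_rfl]
    refine card_le_card fun i hi => ?_
    obtain ⟨s, hs, rfl⟩ := mem_image.1 hi
    rw [mem_range] at hs
    have := hra s (by omega)
    exact mem_filter.2 ⟨hbig s (by omega), by omega⟩
  have := h.card_filter_le (W - j)
  omega

theorem not_hasDoubledStaircase_and_rev (h : IsWitness W r big X v) (hpos : ∀ i, 1 ≤ r i) :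
    ¬(HasDoubledStaircase W r ∧ HasDoubledStaircase W (r ∘ Fin.rev)) := by
  rintro ⟨hD, hU⟩
  rcases eq_or_ne X W with rfl | hXW
  · exact h.not_hasDoubledStaircase hpos hD
  rcases eq_or_ne X 1 with rfl | hX1
  · have h' := h.rev
    rw [Nat.add_sub_cancel] at h'
    exact h'.not_hasDoubledStaircase (fun i => hpos _) hU
  have := h.one_le
  have := h.le
  obtain ⟨j, a, ha, hra⟩ := hD
  obtain ⟨k, b, hb, hrb⟩ := hU
  have hj : j ≠ 0 := by
    rintro rfl
    exact (ha (a := 0) (b := 1) (by simp) (by simp) one_pos).ne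
      (h.eq_of_rank_eq (by simpa using hra 0) (by simpa using hra 1 le_rfl))
  have hk : k ≠ 0 := by
    rintro rfl
    exact (hb (a := 0) (b := 1) (by simp) (by simp) one_pos).ne (Fin.rev_injective
      (h.eq_of_rank_eq (by simpa using hrb 0) (by simpa using hrb 1 le_rfl)))
  -- `a 0 = (b 0).rev` is the unique child of rank `W`; with `a 1` and `(b 1).rev` it gives three
  -- big children of rank `≥ W - 1`
  have hab : a 0 = (b 0).rev := h.eq_of_rank_eq (by simpa using hra 0) (by simpa using hrb 0)
  have ha1 : a 0 < a 1 := ha (by simp) (Set.mem_Iic.2 (by omega)) one_pos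
  have hb1 : (b 1).rev < a 0 :=
    hab ▸ Fin.rev_lt_rev.2 (hb (by simp) (Set.mem_Iic.2 (by omega)) one_pos)
  have hsub : {a 0, a 1, (b 1).rev} ⊆ big.filter fun i => W - 1 ≤ r i := by
    have hra0 : r (a 0) = W := by simpa using hra 0
    have hra1 : r (a 1) = W - 1 := (hra 1 (by omega)).trans (by rw [min_eq_left (by omega)])
    have hrb1 : r (b 1).rev = W - 1 := (hrb 1 (by omega)).trans (by rw [min_eq_left (by omega)])
    intro i hi
    simp only [mem_insert, mem_singleton] at hi
    rcases hi with rfl | rfl | rfl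
    · exact mem_filter.2 ⟨h.mem_of_rank_eq hra0, by omega⟩
    · exact mem_filter.2 ⟨h.mem_of_le_rank (by omega) (by omega), by omega⟩
    · exact mem_filter.2 ⟨h.mem_of_le_rank (by omega) (by omega), by omega⟩
  have hcard : ({a 0, a 1, (b 1).rev} : Finset (Fin n)).card = 3 :=
    card_eq_three.2 ⟨_, _, _, ha1.ne, hb1.ne', (hb1.trans ha1).ne', rfl⟩
  have := card_le_card hsub
  have := h.card_filter_le (W - 1)
  omega

end IsWitness

/-- Greedy left-to-right scan: `stairCount W f k` is the length of the staircase `W, W - 1, …`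
picked greedily from `f 0, …, f (k - 1)`. -/
def stairCount (W : ℕ) (f : ℕ → ℕ) : ℕ → ℕ
  | 0 => 0
  | k + 1 => stairCount W f k + if f k + stairCount W f k = W then 1 else 0

section stairCount

variable {W : ℕ} {f : ℕ → ℕ}

theorem stairCount_succ (k : ℕ) :
    stairCount W f (k + 1) = stairCount W f k + if f k + stairCount W f k = W then 1 else 0 :=
  rfl

theorem monotone_stairCount : Monotone (stairCount W f) :=
  monotone_nat_of_le_succ fun k => by
    rw [stairCount_succ]
    exact Nat.le_add_right _ _

theorem exists_lt_of_lt_stairCount {s k : ℕ} (hs : s < stairCount W f k) :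
    ∃ i < k, stairCount W f i = s ∧ f i + stairCount W f i = W := by
  induction k with
  | zero => exact absurd hs (Nat.not_lt_zero s)
  | succ k ih =>
    by_cases hk : s < stairCount W f k
    · obtain ⟨i, hik, hi⟩ := ih hk
      exact ⟨i, by omega, hi⟩
    · rw [stairCount_succ] at hs
      split_ifs at hs with hstep
      · exact ⟨k, by omega, by omega, hstep⟩
      · omega

theorem card_filter_range_stairCount (k : ℕ) :
    ((range k).filter fun i => f i + stairCount W f i = W).card = stairCount W f k := by
  induction k with
  | zero => rfl
  | succ k ih =>
    rw [range_add_one, filter_insert, stairCount_succ, ← ih]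
    split_ifs
    · exact card_insert_of_notMem (by simp)
    · rfl

end stairCount

section greedy

-- `r ∘ Nat.cast` wraps around beyond position `n`, but `stairCount W f k` reads `f` only below `k`.
open Fin.NatCast

variable {n W : ℕ} {r : Fin (n + 1) → ℕ}

theorem add_stairCount_le (hW : ∀ i, r i ≤ W) (hD : ¬HasDoubledStaircase W r)
    (i : Fin (n + 1)) : r i + stairCount W (r ∘ Nat.cast) i ≤ W := by
  by_contra hi
  set c := stairCount W (r ∘ Nat.cast)
  -- otherwise the greedy staircase before `i` already passes through the rank `r i`
  have hstep : ∀ s ≤ W - r i, ∃ p : Fin (n + 1), p < i ∧ c p = s ∧ r p + s = W := by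
    intro s hs
    have := hW i
    obtain ⟨p, hpi, hp, hpW⟩ := exists_lt_of_lt_stairCount (show s < c i by omega)
    refine ⟨⟨p, by omega⟩, Fin.lt_def.2 hpi, hp, ?_⟩
    rw [← hp, ← Fin.natCast_eq_mk]
    exact hpW
  choose p hp using hstep
  have hmono : Monotone c := monotone_stairCount
  refine hD ⟨W - r i, fun s => if hs : s ≤ W - r i then p s hs else i, ?_, fun s hs => ?_⟩
  · intro s hs t ht hst
    rw [Set.mem_Iic] at hs ht
    by_cases htu : t ≤ W - r i
    · dsimp only
      rw [dif_pos (by omega), dif_pos htu]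
      refine Fin.lt_def.2 (hmono.reflect_lt ?_)
      rw [(hp s _).2.1, (hp t _).2.1]
      exact hst
    · dsimp only
      rw [dif_pos (by omega), dif_neg htu]
      exact (hp s _).1
  · by_cases hsu : s ≤ W - r i
    · have := (hp s hsu).2.2
      dsimp only
      rw [dif_pos hsu, min_eq_left hsu]
      omega
    · have := hW i
      dsimp only
      rw [dif_neg hsu, min_eq_right (by omega)]
      omega

theorem exists_isWitness_top (hpos : ∀ i, 1 ≤ r i) (hW : ∀ i, r i ≤ W)
    (hD : ¬HasDoubledStaircase W r) : ∃ big v, IsWitness W r big W v := by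
  have hle := add_stairCount_le hW hD
  set c := stairCount W (r ∘ Nat.cast)
  let big := univ.filter (fun i : Fin (n + 1) => r i + c i = W) ∪ {Fin.last n}
  have hcard (i : Fin (n + 1)) : (big.filter fun j => j < i).card ≤ c i := by
    refine (card_le_card_of_injOn Fin.val (fun j hj => ?_) Fin.val_injective.injOn).trans
      (card_filter_range_stairCount (W := W) (f := r ∘ Nat.cast) i).le
    obtain ⟨hj, hji⟩ := mem_filter.1 (mem_coe.1 hj)
    have hj' : j ≠ Fin.last n := (hji.trans_le (Fin.le_last i)).ne
    simp only [big, mem_union, mem_filter, mem_univ, true_and, mem_singleton, hj', or_false] at hj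
    rw [mem_coe, mem_filter, mem_range]
    exact ⟨hji, by simpa using hj⟩
  have hlt : ∀ i ∈ big, ∀ j ∈ big, i < j → c i < c j := by
    intro i hi j _ hij
    have hi' : i ≠ Fin.last n := (hij.trans_le (Fin.le_last j)).ne
    simp only [big, mem_union, mem_filter, mem_univ, true_and, mem_singleton, hi', or_false] at hi
    have hstep : c (i + 1) = c i + 1 := by simp [c, stairCount_succ, hi]
    have hmono : Monotone c := monotone_stairCount
    have := hmono (show (i : ℕ) + 1 ≤ j from Fin.lt_def.1 hij)
    omega
  refine ⟨big, Fin.last n, ⟨?_, le_rfl, by simp [big], ?_, ?_, ?_, ?_, ?_⟩⟩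
  · exact (hpos 0).trans (hW 0)
  · have := hcard (Fin.last n)
    have := hle (Fin.last n)
    have := hpos (Fin.last n)
    omega
  · rw [filter_false_of_mem fun i _ => (Fin.le_last i).not_gt, card_empty, zero_add]
  · intro i hi _
    have hi : r i + c i ≠ W := fun h => hi (by simp [big, h])
    have := hcard i
    have := hle i
    omega
  · exact fun i _ hi => absurd hi (Fin.le_last i).not_gt
  · refine ⟨fun i => W - c i, fun i _ => ?_, StrictAntiOn.injOn fun i hi j hj hij => ?_⟩
    · have := hle i
      have := hpos i
      dsimp only
      omega
    · have := hlt i hi j hj hij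
      have := hle j
      have := hpos j
      omega

end greedy

theorem IsWitness.exists_corner {n W X : ℕ} {r : Fin n → ℕ} {big : Finset (Fin n)} {v : Fin n}
    (h : IsWitness W r big X v) (hpos : ∀ i, 1 ≤ r i) :
    ∃ big X v, IsWitness W r big X v ∧ (X = 1 ∨ X = W) := by
  cases n with
  | zero => exact v.elim0
  | succ n =>
    by_cases hU : HasDoubledStaircase W (r ∘ Fin.rev)
    · obtain ⟨big', v', h'⟩ := exists_isWitness_top hpos h.rank_le
        fun hD => h.not_hasDoubledStaircase_and_rev hpos ⟨hD, hU⟩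
      exact ⟨big', W, v', h', Or.inr rfl⟩
    · obtain ⟨big', v', h'⟩ :=
        exists_isWitness_top (r := r ∘ Fin.rev) (fun i => hpos _) (fun i => h.rank_le _) hU
      have hrr : (r ∘ Fin.rev) ∘ Fin.rev = r := funext fun i => by simp
      have h'' := h'.rev
      rw [Nat.add_sub_cancel_left, hrr] at h''
      exact ⟨_, 1, _, h'', Or.inl rfl⟩

theorem hasRankWitness_of_ne_nil {rs : List ℕ} (h : rs ≠ []) :
    hasRankWitness rs (rs.sum + rs.length + 1) := by
  have hn : 0 < rs.length := List.length_pos_iff.2 h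
  refine ⟨univ, 1, ⟨0, hn⟩, isRankWitness_iff.2 ⟨le_rfl, by omega, mem_univ _, ?_, ?_,
    fun i hi => absurd (mem_univ i) hi, fun i hi => absurd (mem_univ i) hi, ?_⟩⟩
  · rw [filter_false_of_mem fun i _ => by simp [Fin.lt_def], card_empty]
    exact one_pos
  · have := card_filter_le (univ : Finset (Fin rs.length)) (fun i => ⟨0, hn⟩ < i)
    rw [card_univ, Fintype.card_fin] at this
    omega
  · refine ⟨fun i => rs.sum + 1 + i, fun i _ => ?_, fun i _ j _ hij => Fin.ext (by simpa using hij)⟩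
    have := List.le_sum_of_mem (List.get_mem rs i)
    have := i.isLt
    dsimp only
    omega

theorem rankAux_mem {rs : List ℕ} (h : rs ≠ []) :
    rankAux rs ∈ {W | 1 ≤ W ∧ hasRankWitness rs W} := by
  rw [rankAux, if_neg h]
  exact Nat.sInf_mem ⟨_, by omega, hasRankWitness_of_ne_nil h⟩

theorem rank_node (cs : List RTree) : rank (node cs) = rankAux (cs.map rank) := by
  rw [rank, List.attach_map_val]

theorem one_le_rank (T : RTree) : 1 ≤ rank T := by
  obtain ⟨cs⟩ := T
  rw [rank_node]
  by_cases h : cs.map rank = []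
  · rw [rankAux, if_pos h]
  · exact (rankAux_mem h).1

/-- Every ordered rooted tree of rank `W ≥ 2` has a rank-`W`-witness whose
coordinate `X` satisfies `X = 1` or `X = W`. -/
theorem rankWitness_corner_coordinate (T : RTree) (W : ℕ)
    (hW : 2 ≤ W) (hT : rank T = W) :
    ∃ (big : Finset (Fin (T.children.map rank).length)) (X : ℕ)
      (v : Fin (T.children.map rank).length),
      IsRankWitness (T.children.map rank) W big X v ∧ (X = 1 ∨ X = W) := by
  obtain ⟨cs⟩ := T
  rw [rank_node] at hT
  have hcs : cs.map rank ≠ [] := fun h => by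
    rw [h, rankAux, if_pos rfl] at hT
    omega
  obtain ⟨big, X, v, h⟩ := hT ▸ (rankAux_mem hcs).2
  obtain ⟨big', X', v', h', hX'⟩ :=
    (isRankWitness_iff.1 h).exists_corner fun i => by simp [one_le_rank]
  exact ⟨big', X', v', isRankWitness_iff.2 h', hX'⟩

end RTree
end
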